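/- For the splitting matching relation, the computed set S in t₁ <_Λ t₂ ⇒ S is unique (the relation is a total function of the pair of sequents), and S ⊆ {⊥} ∪ {p ∈ Pos(t₁) | t₁|_p is a substitutable variable of Δ₁}; in particular all non-⊥ elements of S are positions of variables of t₁ and are pairwise independent (none is a prefix of another). -/
import Mathlib


/-- First-order terms: variables, constants and (binary) application. -/
inductive Tm
  | var (x : ℕ)
  | const (c : ℕ)
  | app (a b : Tm)
deriving DecidableEq

/-- The size of a term. -/
def Tm.size : Tm → ℕ
  | .var _ => 1
  | .const _ => 1
  | .app a b => a.size + b.size + 1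

/-- Free variables of a term. -/
def Tm.fv : Tm → Finset ℕ
  | .var x => {x}
  | .const _ => ∅
  | .app a b => a.fv ∪ b.fv

/-- The subterm at a position (positions are lists of booleans). -/
def subtermAt : Tm → List Bool → Option Tm
  | t, [] => some t
  | .app a _, false :: p => subtermAt a p
  | .app _ b, true :: p => subtermAt b p
  | _, _ => none

/-- |t|_p: the size of the subterm of t at position p (0 at invalid positions). -/
def sizeAt (t : Tm) (p : List Bool) : ℕ := (subtermAt t p).elim 0 Tm.size

/-- The splitting matching relation `t₁ <_p t₂ ⇒ S`, parametrized by the sets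
Δ₁, Δ₂ of substitutable variables; `none` plays the role of ⊥. -/
inductive SM (Δ1 Δ2 : Finset ℕ) : Tm → Tm → List Bool → Finset (Option (List Bool)) → Prop
  | appApp {a a' b b' : Tm} {p S1 S2} :
      SM Δ1 Δ2 a a' (p ++ [false]) S1 → SM Δ1 Δ2 b b' (p ++ [true]) S2 →
      SM Δ1 Δ2 (.app a b) (.app a' b') p (S1 ∪ S2)
  | constEq (c : ℕ) (p : List Bool) : SM Δ1 Δ2 (.const c) (.const c) p ∅
  | constNe {c c' : ℕ} (p : List Bool) : c ≠ c' → SM Δ1 Δ2 (.const c) (.const c') p {none}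
  | appConst (a b : Tm) (c : ℕ) (p : List Bool) : SM Δ1 Δ2 (.app a b) (.const c) p {none}
  | constApp (c : ℕ) (a b : Tm) (p : List Bool) : SM Δ1 Δ2 (.const c) (.app a b) p {none}
  | varSub {x t2 p} : x ∈ Δ1 → (∀ y, t2 = Tm.var y → y ∈ Δ2) →
      SM Δ1 Δ2 (.var x) t2 p {some p}
  | varSubRigid {x y : ℕ} (p : List Bool) : x ∈ Δ1 → y ∉ Δ2 →
      SM Δ1 Δ2 (.var x) (.var y) p {none}
  | varRigidEq {x : ℕ} (p : List Bool) : x ∉ Δ1 → SM Δ1 Δ2 (.var x) (.var x) p ∅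
  | varRigidNe {x : ℕ} {t2 : Tm} (p : List Bool) : x ∉ Δ1 → t2 ≠ Tm.var x →
      SM Δ1 Δ2 (.var x) t2 p {none}
  | rigidVar2 {t1 : Tm} {y : ℕ} (p : List Bool) : (∀ x, t1 ≠ Tm.var x) → y ∈ Δ2 →
      SM Δ1 Δ2 t1 (.var y) p ∅
  | badVar2 {t1 : Tm} {y : ℕ} (p : List Bool) : (∀ x, t1 ≠ Tm.var x) → y ∉ Δ2 →
      SM Δ1 Δ2 t1 (.var y) p {none}

/-- The distance associated with a splitting-matching result S against t₂:
0 if ⊥ ∈ S, otherwise the sum of the sizes |t₂|_p over p ∈ S. -/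
def dist (t2 : Tm) (S : Finset (Option (List Bool))) : ℕ :=
  if none ∈ S then 0 else S.sum (fun q => q.elim 0 (sizeAt t2))

/-- Application of a substitution. -/
def subst (γ : ℕ → Tm) : Tm → Tm
  | .var x => γ x
  | .const c => .const c
  | .app a b => .app (subst γ a) (subst γ b)

lemma sm_exists (Δ1 Δ2 : Finset ℕ) : ∀ (t1 t2 : Tm) (p : List Bool), ∃ S, SM Δ1 Δ2 t1 t2 p S := by
  intro t1
  induction t1 with
  | var x =>
    intro t2 p
    by_cases hx : x ∈ Δ1
    · match t2 with
      | .var y =>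
        by_cases hy : y ∈ Δ2
        · exact ⟨_, SM.varSub hx (by rintro z ⟨rfl⟩; exact hy)⟩
        · exact ⟨_, SM.varSubRigid p hx hy⟩
      | .const c => exact ⟨_, SM.varSub hx (by intro y h; cases h)⟩
      | .app a b => exact ⟨_, SM.varSub hx (by intro y h; cases h)⟩
    · by_cases he : t2 = Tm.var x
      · subst he; exact ⟨_, SM.varRigidEq p hx⟩
      · exact ⟨_, SM.varRigidNe p hx he⟩
  | const c =>
    intro t2 p
    match t2 with
    | .var y =>
      by_cases hy : y ∈ Δ2
      · exact ⟨_, SM.rigidVar2 p (by intro z h; cases h) hy⟩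
      · exact ⟨_, SM.badVar2 p (by intro z h; cases h) hy⟩
    | .const c' =>
      by_cases hc : c = c'
      · subst hc; exact ⟨_, SM.constEq c p⟩
      · exact ⟨_, SM.constNe p hc⟩
    | .app a b => exact ⟨_, SM.constApp c a b p⟩
  | app a b iha ihb =>
    intro t2 p
    match t2 with
    | .var y =>
      by_cases hy : y ∈ Δ2
      · exact ⟨_, SM.rigidVar2 p (by intro z h; cases h) hy⟩
      · exact ⟨_, SM.badVar2 p (by intro z h; cases h) hy⟩
    | .const c => exact ⟨_, SM.appConst a b c p⟩
    | .app a' b' =>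
      obtain ⟨S1, h1⟩ := iha a' (p ++ [false])
      obtain ⟨S2, h2⟩ := ihb b' (p ++ [true])
      exact ⟨_, SM.appApp h1 h2⟩

lemma sm_unique {Δ1 Δ2 : Finset ℕ} {t1 t2 : Tm} {p : List Bool} {S S' : Finset (Option (List Bool))}
    (h : SM Δ1 Δ2 t1 t2 p S) (h' : SM Δ1 Δ2 t1 t2 p S') : S = S' := by
  induction h generalizing S' with
  | appApp h1 h2 ih1 ih2 =>
    cases h' with
    | appApp h1' h2' => rw [ih1 h1', ih2 h2']
  | _ =>
    cases h' <;> first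
      | rfl
      | simp_all
      | (rename_i h1 h2 h3; exact absurd rfl (h3 _) |>.elim)

lemma sm_pos {Δ1 Δ2 : Finset ℕ} {t1 t2 : Tm} {p : List Bool} {S : Finset (Option (List Bool))}
    (h : SM Δ1 Δ2 t1 t2 p S) :
    ∀ q, some q ∈ S → ∃ r, q = p ++ r ∧ ∃ x ∈ Δ1, subtermAt t1 r = some (Tm.var x) := by
  induction h with
  | appApp h1 h2 ih1 ih2 =>
    intro q hq
    rcases Finset.mem_union.1 hq with hq | hq
    · obtain ⟨r, rfl, x, hx, hs⟩ := ih1 q hq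
      exact ⟨false :: r, by simp, x, hx, hs⟩
    · obtain ⟨r, rfl, x, hx, hs⟩ := ih2 q hq
      exact ⟨true :: r, by simp, x, hx, hs⟩
  | varSub hx _ =>
    intro q hq
    simp only [Finset.mem_singleton, Option.some_inj] at hq
    subst hq
    exact ⟨[], by simp, _, hx, rfl⟩
  | _ => intro q hq <;> simp_all

lemma sm_indep {Δ1 Δ2 : Finset ℕ} {t1 t2 : Tm} {p : List Bool} {S : Finset (Option (List Bool))}
    (h : SM Δ1 Δ2 t1 t2 p S) :
    ∀ q1 q2 : List Bool, some q1 ∈ S → some q2 ∈ S → q1 ≠ q2 → ¬ q1 <+: q2 := by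
  induction h with
  | appApp h1 h2 ih1 ih2 =>
    intro q1 q2 hq1 hq2 hne hpre
    rcases Finset.mem_union.1 hq1 with hq1 | hq1 <;>
      rcases Finset.mem_union.1 hq2 with hq2 | hq2
    · exact ih1 q1 q2 hq1 hq2 hne hpre
    · obtain ⟨r1, rfl, -⟩ := sm_pos h1 q1 hq1
      obtain ⟨r2, rfl, -⟩ := sm_pos h2 q2 hq2
      obtain ⟨s, hs⟩ := hpre
      simp [List.append_assoc] at hs
    · obtain ⟨r1, rfl, -⟩ := sm_pos h2 q1 hq1
      obtain ⟨r2, rfl, -⟩ := sm_pos h1 q2 hq2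
      obtain ⟨s, hs⟩ := hpre
      simp [List.append_assoc] at hs
    · exact ih2 q1 q2 hq1 hq2 hne hpre
  | varSub _ _ => intro q1 q2 hq1 hq2 hne _; simp_all
  | _ => intro q1 q2 hq1 hq2 <;> simp_all

/-- The splitting matching relation is a total function of the input sequents,
and the computed set S contains, besides possibly ⊥, only positions of
substitutable variables of t₁, which are pairwise independent in the prefix
order. -/
theorem splitting_matching_function
    (Δ1 Δ2 : Finset ℕ) (t1 t2 : Tm) :
    (∃! S, SM Δ1 Δ2 t1 t2 [] S) ∧
    (∀ S, SM Δ1 Δ2 t1 t2 [] S →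
      (∀ q ∈ S, ∀ p : List Bool, q = some p → ∃ x ∈ Δ1, subtermAt t1 p = some (Tm.var x)) ∧
      (∀ p q : List Bool, some p ∈ S → some q ∈ S → p ≠ q → ¬ p <+: q)) := by
  obtain ⟨S, hS⟩ := sm_exists Δ1 Δ2 t1 t2 []
  refine ⟨⟨S, hS, fun S' hS' => sm_unique hS' hS⟩, fun S hS => ⟨?_, ?_⟩⟩
  · intro q hq p hp
    subst hp
    obtain ⟨r, hr, x, hx, hs⟩ := sm_pos hS p hq
    simp at hr
    subst hr
    exact ⟨x, hx, hs⟩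
  · exact fun p q hp hq => sm_indep hS p q hp hq
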